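/- arXiv:2408.00750 — 2 statements merged into one kernel-verified Lean document; each statement's English description precedes it below -/
import Mathlib

section
/- Let R ∈ (ℤ/p^αℤ)[z] be a nonzero polynomial with (R mod p) = c·z^{e₀}·G where c ∈ 𝔽_p^×, e₀ ≥ 1, and G ∈ 𝔽_p[z] is not divisible by z. Define λ₀(S) = Λ₀(S · R^{p^α − p^{α−1}}), where Λ₀ is the Cartier operator picking coefficients at exponents divisible by p. If S is a Laurent polynomial over ℤ/p^αℤ with min-degree ≥ 1 − p^{α−1} and degree ≤ p^{α−1}·deg(R mod p), then λ₀ⁿ(S) is a polynomial for all n ≥ 1, and λ₀ⁿ(S) is divisible by z^{p^{α−1}·e₀} for all n ≥ ⌊log_p e₀⌋ + α. -/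
open Finsupp in
/-- The Cartier operator `Λ_r` on Laurent polynomials: the coefficient of `xⁿ` in
`cartier p r S` is the coefficient of `x^(p*n + r)` in `S`. -/
noncomputable def cartier {A : Type*} [CommRing A] (p : ℕ) [NeZero p] (r : ℤ)
    (S : LaurentPolynomial A) : LaurentPolynomial A :=
  AddMonoidAlgebra.ofCoeff <| Finsupp.comapDomain (fun n : ℤ => (p : ℤ) * n + r) S.coeff
    (Set.injOn_of_injective (fun a b h => by
      have hp : (p : ℤ) ≠ 0 := by exact_mod_cast (NeZero.ne p)
      have := mul_left_cancel₀ hp (by linarith [h] : (p : ℤ) * a = p * b)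
      exact this))

/-! Write `m = p^(α-1)`, `a = m·e₀` and `b = m·deg(R mod p)`. By lifting the exponent,
`R ^ (p^α - p^(α-1))` only depends on `R mod p`, so it equals the same power of a lift of
`R mod p` supported in `[e₀, deg(R mod p)]`; hence it is supported in `[(p-1)a, (p-1)b]`.
Consequently, if `T` is supported in `[a - k, b]` then `λ₀(T)` is supported in `[a - ⌊k/p⌋, b]`:
the upper end is stable and the deficit below `a` is divided by `p` at each step. Initially
`k = a + m - 1 < 2a`, so one step already gives `⌊k/p⌋ ≤ a`, and `k < p^n` as soon as
`n ≥ ⌊log_p e₀⌋ + α`. -/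

open Polynomial LaurentPolynomial Finset
open scoped Pointwise

theorem ZMod.natCast_dvd_of_castHom_eq_zero {m n : ℕ} [NeZero n] {h : m ∣ n} {x : ZMod n}
    (hx : ZMod.castHom h (ZMod m) x = 0) : (m : ZMod n) ∣ x := by
  rw [← ZMod.natCast_zmod_val x, map_natCast, ZMod.natCast_eq_zero_iff] at hx
  obtain ⟨k, hk⟩ := hx
  rw [← ZMod.natCast_zmod_val x, hk, Nat.cast_mul]
  exact dvd_mul_right _ _

theorem pow_pow_eq_of_natCast_dvd_sub {A : Type*} [CommRing A] {p α : ℕ} {x y : A}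
    (hα : α ≠ 0) (hchar : (p : A) ^ α = 0) (h : (p : A) ∣ x - y) :
    x ^ p ^ (α - 1) = y ^ p ^ (α - 1) := by
  have := dvd_sub_pow_of_dvd_sub h (α - 1)
  rwa [Nat.sub_one_add_one hα, hchar, zero_dvd_iff, sub_eq_zero] at this

theorem Int.add_sub_one_ediv_le {a b c : ℤ} (ha : 0 ≤ a) (hb : b ≤ a) (hc : 2 ≤ c) :
    (a + b - 1) / c ≤ a :=
  Int.lt_add_one_iff.1 <| (Int.ediv_lt_iff_lt_mul (by omega)).2 (by nlinarith)

theorem Nat.pow_pred_mul_succ_le_pow {p e α n : ℕ} (hp : 1 < p) (hα : α ≠ 0)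
    (hn : Nat.log p e + α ≤ n) : p ^ (α - 1) * (e + 1) ≤ p ^ n := calc
  p ^ (α - 1) * (e + 1) ≤ p ^ (α - 1) * p ^ (Nat.log p e + 1) :=
    Nat.mul_le_mul_left _ (Nat.lt_pow_succ_log_self hp e)
  _ = p ^ (Nat.log p e + α) := by rw [← pow_add]; congr 1; omega
  _ ≤ p ^ n := Nat.pow_le_pow_right (by omega) hn

theorem Nat.pow_sub_pow_pred {p α : ℕ} (hα : α ≠ 0) :
    p ^ α - p ^ (α - 1) = p ^ (α - 1) * (p - 1) := by
  rw [Nat.mul_sub_one, ← pow_succ, Nat.sub_one_add_one hα]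

namespace Polynomial

variable {A B : Type*} [Semiring A] [Semiring B]

theorem exists_map_eq_of_support_subset (φ : A →+* B) (R : A[X]) :
    ∃ R' : A[X], R'.map φ = R.map φ ∧ R'.support ⊆ (R.map φ).support := by
  classical
  refine ⟨∑ i ∈ (R.map φ).support, monomial i (R.coeff i), ?_, fun i hi => ?_⟩
  · ext i
    simp only [coeff_map, finsetSum_coeff, coeff_monomial, Finset.sum_ite_eq', mem_support_iff]
    split_ifs with h <;> simp_all
  · by_contra hi'
    simp [finsetSum_coeff, coeff_monomial, hi'] at hi

theorem support_subset_Icc_of_X_pow_dvd {P : A[X]} {e : ℕ} (h : X ^ e ∣ P) :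
    P.support ⊆ Icc e P.natDegree := fun i hi =>
  mem_Icc.2 ⟨not_lt.1 fun hlt => mem_support_iff.1 hi (X_pow_dvd_iff.1 h i hlt),
    le_natDegree_of_mem_supp i hi⟩

end Polynomial

namespace LaurentPolynomial

variable {A : Type*} [CommRing A]

theorem support_coeff_subset_Icc {f : A[T;T⁻¹]} {a b : ℤ} (hlo : ∀ n < a, f.coeff n = 0)
    (hhi : ∀ n, b < n → f.coeff n = 0) : f.coeff.support ⊆ Icc a b := fun n hn =>
  mem_Icc.2 ⟨not_lt.1 fun h => Finsupp.mem_support_iff.1 hn (hlo n h),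
    not_lt.1 fun h => Finsupp.mem_support_iff.1 hn (hhi n h)⟩

theorem support_coeff_toLaurent_subset_Icc {P : A[X]} {a b : ℕ} (h : P.support ⊆ Icc a b) :
    (toLaurent P).coeff.support ⊆ Icc (a : ℤ) b := by
  intro j hj
  rw [support_coeff_toLaurent, mem_map] at hj
  obtain ⟨i, hi, rfl⟩ := hj
  simpa using h hi

theorem support_coeff_mul_subset_Icc {f g : A[T;T⁻¹]} {a b c d : ℤ}
    (hf : f.coeff.support ⊆ Icc a b) (hg : g.coeff.support ⊆ Icc c d) :
    (f * g).coeff.support ⊆ Icc (a + c) (b + d) :=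
  (AddMonoidAlgebra.support_coeff_mul_subset f g).trans
    ((add_subset_add hf hg).trans (Icc_add_Icc_subset a b c d))

theorem support_coeff_pow_subset_Icc {f : A[T;T⁻¹]} {a b : ℤ} (hf : f.coeff.support ⊆ Icc a b)
    (n : ℕ) : (f ^ n).coeff.support ⊆ Icc (n * a) (n * b) := by
  induction n with
  | zero =>
    simp only [pow_zero, Nat.cast_zero, zero_mul, Icc_self]
    exact AddMonoidAlgebra.support_coeff_one_subset
  | succ n ih => simpa [pow_succ, add_mul] using support_coeff_mul_subset_Icc ih hf

theorem support_coeff_cartier_subset_Icc {p : ℕ} [NeZero p] {T : A[T;T⁻¹]} {a b k : ℤ}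
    (h : T.coeff.support ⊆ Icc (p * a - k) (p * b)) :
    (cartier p 0 T).coeff.support ⊆ Icc (a - k / p) b := by
  have hp : (0 : ℤ) < p := by exact_mod_cast Nat.pos_of_neZero p
  intro j hj
  have hj' : p * j ∈ T.coeff.support := by simpa [cartier] using hj
  obtain ⟨hlo, hhi⟩ := mem_Icc.1 (h hj')
  refine mem_Icc.2 ⟨?_, le_of_mul_le_mul_left hhi hp⟩
  have : a - j ≤ k / p := (Int.le_ediv_iff_mul_le hp).2 (by linarith)
  linarith

theorem support_coeff_iterate_cartier_mul_subset_Icc {p : ℕ} [NeZero p] {Q S : A[T;T⁻¹]}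
    {a b k : ℤ} (hQ : Q.coeff.support ⊆ Icc ((p - 1) * a) ((p - 1) * b))
    (hS : S.coeff.support ⊆ Icc (a - k) b) (n : ℕ) :
    ((fun T => cartier p 0 (T * Q))^[n] S).coeff.support ⊆ Icc (a - k / p ^ n) b := by
  induction n with
  | zero => simpa using hS
  | succ n ih =>
    rw [Function.iterate_succ_apply', pow_succ, ← Int.ediv_ediv_of_nonneg (by positivity)]
    exact support_coeff_cartier_subset_Icc ((support_coeff_mul_subset_Icc ih hQ).trans
      (Icc_subset_Icc (by linarith) (by linarith)))

end LaurentPolynomial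

section ZModPrimePow

variable {p α : ℕ} [NeZero p] (hα : α ≠ 0)

theorem Polynomial.pow_totient_eq_of_map_castHom_eq {R R' : (ZMod (p ^ α))[X]}
    (h : R.map (ZMod.castHom (dvd_pow_self p hα) (ZMod p)) =
      R'.map (ZMod.castHom (dvd_pow_self p hα) (ZMod p))) :
    R ^ (p ^ α - p ^ (α - 1)) = R' ^ (p ^ α - p ^ (α - 1)) := by
  have hchar : (p : (ZMod (p ^ α))[X]) ^ α = 0 := by
    rw [← Nat.cast_pow, CharP.cast_eq_zero]
  have hdvd : (p : (ZMod (p ^ α))[X]) ∣ R - R' := by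
    rw [← C_eq_natCast, C_dvd_iff_dvd_coeff]
    intro i
    refine ZMod.natCast_dvd_of_castHom_eq_zero (h := dvd_pow_self p hα) ?_
    rw [← coeff_map, Polynomial.map_sub, h, sub_self, coeff_zero]
  rw [Nat.pow_sub_pow_pred hα, pow_mul, pow_mul,
    pow_pow_eq_of_natCast_dvd_sub hα hchar hdvd]

theorem LaurentPolynomial.support_coeff_toLaurent_pow_totient_subset_Icc {R : (ZMod (p ^ α))[X]}
    {e : ℕ} (h : X ^ e ∣ R.map (ZMod.castHom (dvd_pow_self p hα) (ZMod p))) :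
    (toLaurent R ^ (p ^ α - p ^ (α - 1))).coeff.support ⊆
      Icc ((p - 1) * ((p : ℤ) ^ (α - 1) * e)) ((p - 1) *
        ((p : ℤ) ^ (α - 1) * (R.map (ZMod.castHom (dvd_pow_self p hα) (ZMod p))).natDegree)) := by
  obtain ⟨R', hR'map, hR'supp⟩ :=
    exists_map_eq_of_support_subset (ZMod.castHom (dvd_pow_self p hα) (ZMod p)) R
  rw [← map_pow, pow_totient_eq_of_map_castHom_eq hα hR'map.symm, map_pow]
  convert support_coeff_pow_subset_Icc (support_coeff_toLaurent_subset_Icc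
    (hR'supp.trans (support_subset_Icc_of_X_pow_dvd h))) _ using 2 <;>
  · rw [Nat.pow_sub_pow_pred hα]
    push_cast [Nat.one_le_iff_ne_zero.2 (NeZero.ne p)]
    ring

end ZModPrimePow

/-- Let `R ∈ (ℤ/p^αℤ)[z]` be nonzero with `R mod p = c·z^{e₀}·G`, `c ≠ 0`, `e₀ ≥ 1`,
`z ∤ G`.  Let `λ₀(S) = Λ₀(S · R^{p^α - p^{α-1}})`.  If `S` is a Laurent polynomial
with min-degree `≥ 1 - p^{α-1}` and degree `≤ p^{α-1}·deg(R mod p)`, then `λ₀ⁿ(S)` is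
a polynomial for all `n ≥ 1`, and `λ₀ⁿ(S)` is divisible by `z^{p^{α-1}·e₀}` for all
`n ≥ ⌊log_p e₀⌋ + α`. -/
theorem stmt_15 (p : ℕ) [Fact p.Prime] [NeZero p] (α : ℕ) (hα : 1 ≤ α)
    (R : Polynomial (ZMod (p ^ α)))
    (c : ZMod p) (e₀ : ℕ) (he₀ : 1 ≤ e₀)
    (G : Polynomial (ZMod p))
    (hfact : R.map (ZMod.castHom (dvd_pow_self p (by omega)) (ZMod p)) =
      Polynomial.C c * Polynomial.X ^ e₀ * G)
    (lam : LaurentPolynomial (ZMod (p ^ α)) → LaurentPolynomial (ZMod (p ^ α)))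
    (hlam : ∀ S, lam S = cartier p 0 (S * Polynomial.toLaurent R ^ (p ^ α - p ^ (α - 1))))
    (S : LaurentPolynomial (ZMod (p ^ α)))
    (hSmin : ∀ n : ℤ, n < 1 - (p : ℤ) ^ (α - 1) → S.coeff n = 0)
    (hSdeg : ∀ n : ℤ,
      ((p : ℤ) ^ (α - 1)) *
        (R.map (ZMod.castHom (dvd_pow_self p (by omega)) (ZMod p))).natDegree < n →
      S.coeff n = 0) :
    (∀ n : ℕ, 1 ≤ n → ∀ j : ℤ, j < 0 → (lam^[n] S).coeff j = 0) ∧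
    (∀ n : ℕ, Nat.log p e₀ + α ≤ n → ∀ j : ℤ, j < (p : ℤ) ^ (α - 1) * e₀ →
      (lam^[n] S).coeff j = 0) := by
  have hp : 2 ≤ p := (Fact.out : p.Prime).two_le
  have hα' : α ≠ 0 := by omega
  have hX : X ^ e₀ ∣ R.map (ZMod.castHom (dvd_pow_self p hα') (ZMod p)) := by
    rw [hfact]; exact (dvd_mul_left _ _).mul_right _
  have hQ := support_coeff_toLaurent_pow_totient_subset_Icc hα' hX
  set m : ℤ := (p : ℤ) ^ (α - 1)
  have hS : S.coeff.support ⊆ Icc (m * e₀ - (m * e₀ + m - 1)) (m * _) :=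
    support_coeff_subset_Icc (fun n hn => hSmin n (by linarith)) hSdeg
  have hsupp n := support_coeff_iterate_cartier_mul_subset_Icc hQ hS n
  rw [show lam = _ from funext hlam]
  have hm : 1 ≤ m := one_le_pow₀ (by exact_mod_cast Nat.one_le_of_lt hp)
  refine ⟨fun n hn j hj => Finsupp.notMem_support_iff.1 fun hj' => ?_,
    fun n hn j hj => Finsupp.notMem_support_iff.1 fun hj' => ?_⟩
  · have hme : m ≤ m * e₀ := le_mul_of_one_le_right (by omega) (by exact_mod_cast he₀)
    have := Int.add_sub_one_ediv_le (by positivity) hme (show (2 : ℤ) ≤ p ^ n by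
      exact_mod_cast hp.trans (Nat.le_self_pow (by omega) p))
    linarith [(mem_Icc.1 (hsupp n hj')).1]
  · have hle : m * e₀ + m ≤ (p : ℤ) ^ n := by
      simpa [mul_add] using (Nat.cast_le (α := ℤ)).2 (Nat.pow_pred_mul_succ_le_pow hp hα' hn)
    have : (m * e₀ + m - 1) / (p : ℤ) ^ n = 0 :=
      Int.ediv_eq_zero_of_lt (by nlinarith) (by linarith)
    linarith [(mem_Icc.1 (hsupp n hj')).1]
end

section
/- Let R = c ∈ (ℤ/p^αℤ)^× be such that R mod p is a nonzero constant, and define λ₀(S) = Λ₀(S · R^{p^α − p^{α−1}}) on Laurent polynomials over ℤ/p^αℤ. Then λ₀ⁿ(S) = Λ₀ⁿ(S), and for any Laurent polynomial S with min-degree ≥ 1 − p^{α−1} and degree ≤ 0, λ₀ⁿ(S) equals the constant term of S for all n ≥ α − 1. -/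
/-!
By Euler's theorem `c ^ φ(p^α) = 1` and `φ(p^α) = p^α - p^(α-1)`, so the twist by
`c ^ (p^α - p^(α-1))` is trivial and `λ₀ = Λ₀`. The coefficient of `x^m` in `Λ₀ⁿ S` is
the coefficient of `x^(pⁿ m)` in `S`, and for `m ≠ 0` and `n ≥ α - 1` the exponent `pⁿ m`
lies outside `[1 - p^(α-1), 0]`.
-/

open LaurentPolynomial

section Cartier

variable {A : Type*} [CommRing A] (p : ℕ) [NeZero p]

theorem cartier_zero_coeff (S : LaurentPolynomial A) (m : ℤ) :
    (cartier p 0 S).coeff m = S.coeff (p * m) :=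
  congrArg S.coeff (add_zero _)

theorem cartier_zero_iterate_coeff (S : LaurentPolynomial A) (n : ℕ) (m : ℤ) :
    ((cartier p 0)^[n] S).coeff m = S.coeff ((p : ℤ) ^ n * m) := by
  induction n generalizing m with
  | zero => simp
  | succ n ih =>
    rw [Function.iterate_succ_apply', cartier_zero_coeff, ih, pow_succ, mul_assoc]

theorem cartier_zero_iterate_eq_C_coeff_zero {k n : ℕ} (hkn : k ≤ n) (S : LaurentPolynomial A)
    (hlo : ∀ m : ℤ, m < 1 - (p : ℤ) ^ k → S.coeff m = 0)
    (hhi : ∀ m : ℤ, 0 < m → S.coeff m = 0) :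
    (cartier p 0)^[n] S = C (S.coeff 0) := by
  have hp : (1 : ℤ) ≤ p := by exact_mod_cast Nat.one_le_iff_ne_zero.mpr (NeZero.ne p)
  have hpow : (p : ℤ) ^ k ≤ (p : ℤ) ^ n := pow_le_pow_right₀ hp hkn
  have hpos : (0 : ℤ) < (p : ℤ) ^ n := pow_pos (by omega) n
  ext m
  rw [cartier_zero_iterate_coeff]
  rcases lt_trichotomy m 0 with hm | rfl | hm
  · rw [C_apply, if_neg hm.ne]
    exact hlo _ (by nlinarith)
  · simp
  · rw [C_apply, if_neg hm.ne']
    exact hhi _ (mul_pos hpos hm)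

end Cartier

theorem ZMod.pow_prime_pow_sub_pow_pred_eq_one {p α : ℕ} (hp : p.Prime) (hα : 1 ≤ α)
    {c : ZMod (p ^ α)} (hc : IsUnit c) : c ^ (p ^ α - p ^ (α - 1)) = 1 := by
  have htot : Nat.totient (p ^ α) = p ^ α - p ^ (α - 1) := by
    obtain ⟨k, rfl⟩ := Nat.exists_eq_add_of_le' hα
    rw [Nat.totient_prime_pow_succ hp, Nat.add_sub_cancel, Nat.mul_sub_one, pow_succ]
  obtain ⟨u, rfl⟩ := hc
  rw [← htot, ← Units.val_pow_eq_pow_val, ZMod.pow_totient, Units.val_one]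

/-- Let `R = c` be a unit constant in `ℤ/p^αℤ` and `λ₀(S) = Λ₀(S · c^{p^α - p^{α-1}})`.
Then `λ₀ⁿ = Λ₀ⁿ`, and for any Laurent polynomial `S` with min-degree `≥ 1 - p^{α-1}`
and degree `≤ 0`, `λ₀ⁿ(S)` equals the constant term of `S` for all `n ≥ α - 1`. -/
theorem stmt_16 (p : ℕ) [Fact p.Prime] [NeZero p] (α : ℕ) (hα : 1 ≤ α)
    (c : ZMod (p ^ α)) (hc : IsUnit c)
    (lam : LaurentPolynomial (ZMod (p ^ α)) → LaurentPolynomial (ZMod (p ^ α)))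
    (hlam : ∀ S, lam S =
      cartier p 0 (S * LaurentPolynomial.C c ^ (p ^ α - p ^ (α - 1)))) :
    (∀ (S : LaurentPolynomial (ZMod (p ^ α))) (n : ℕ),
      lam^[n] S = (cartier p 0)^[n] S) ∧
    (∀ S : LaurentPolynomial (ZMod (p ^ α)),
      (∀ n : ℤ, n < 1 - (p : ℤ) ^ (α - 1) → S.coeff n = 0) →
      (∀ n : ℤ, 0 < n → S.coeff n = 0) →
      ∀ n : ℕ, α - 1 ≤ n → lam^[n] S = LaurentPolynomial.C (S.coeff 0)) := by
  have hc1 := ZMod.pow_prime_pow_sub_pow_pred_eq_one Fact.out hα hc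
  obtain rfl : lam = cartier p 0 := funext fun S => by
    rw [hlam, ← map_pow, hc1, map_one, mul_one]
  exact ⟨fun _ _ => rfl, fun S hlo hhi _ hn => cartier_zero_iterate_eq_C_coeff_zero p hn S hlo hhi⟩
end
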